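/- arXiv:1304.1206 — 5 statements merged into one kernel-verified Lean document; each statement's English description precedes it below -/
import Mathlib

section
/- Let K be a finite field with Q elements, I a finite index set, and (β_i)_{i∈I} a family of elements of K^× that generates K^× as a group. Let ψ : ℤ^I → K^× be the group homomorphism sending v = (v_i)_{i∈I} to ∏_{i∈I} β_i^{v_i}, and let Γ be a subgroup of ℤ^I contained in the kernel of ψ, so that ψ induces a surjective homomorphism φ : ℤ^I/Γ → K^×. Suppose ℤ^I/Γ is finite with invariant factor decomposition ℤ^I/Γ = ⟨e(1)⟩ ⊕ ⟨e(2)⟩ ⊕ ⋯ ⊕ ⟨e(k)⟩, where e(j) has order d_j in ℤ^I/Γ and d_j divides d_{j+1} for 1 ≤ j < k, with k ≥ 2. Let B ≥ 2 be an integer. If gcd(d_{k-1}, Q−1) is B-smooth, then there exists a B-smooth positive integer v dividing Q−1 such that (Q−1)/v divides the order of φ(e(k)) in K^×. -/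
/-!
Put `v = gcd(d_{k-1}, Q - 1)` and `N = v · ord φ(e(k))`. Each `φ(e(j))` with `j < k` has order
dividing both `d_j ∣ d_{k-1}` and `Q - 1`, hence dividing `v`; so `N` kills the image of every
generator `e(j)`, hence all of `φ(ℤ^I/Γ)`. This image contains every `β_i`, which generate the
cyclic group `K^×` of order `Q - 1`, so `Q - 1 ∣ N`, i.e. `(Q - 1)/v ∣ ord φ(e(k))`.
-/

theorem Fin.dvd_of_le_of_forall_dvd_succ {M : Type*} [Monoid M] {k : ℕ} {d : Fin k → M}
    (hdvd : ∀ j : Fin k, ∀ hj : (j : ℕ) + 1 < k, d j ∣ d ⟨(j : ℕ) + 1, hj⟩) {i j : Fin k}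
    (hij : i ≤ j) : d i ∣ d j := by
  obtain ⟨j, hj⟩ := j
  induction j with
  | zero => rw [show i = ⟨0, hj⟩ from Fin.ext (Nat.le_zero.1 hij)]
  | succ n ih =>
    rcases (Fin.le_def.1 hij).eq_or_lt with h | h
    · rw [Fin.ext h]
    · exact (ih (by omega) (Fin.le_def.2 (by simp at h ⊢; omega))).trans (hdvd ⟨n, by omega⟩ hj)

theorem DirectSum.IsInternal.addSubgroup_closure_range_eq_top {ι G : Type*} [DecidableEq ι]
    [AddCommGroup G] {e : ι → G} (h : IsInternal fun j => AddSubgroup.zmultiples (e j)) :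
    AddSubgroup.closure (Set.range e) = ⊤ := by
  have hsup := h.addSubmonoid_iSup_eq_top (fun j => (AddSubgroup.zmultiples (e j)).toAddSubmonoid)
  refine eq_top_iff.2 fun z _ => ?_
  refine AddSubmonoid.iSup_induction _ (motive := (· ∈ AddSubgroup.closure (Set.range e)))
    (hsup ▸ AddSubmonoid.mem_top z) (fun j x hx => ?_) (zero_mem _) (fun _ _ => add_mem)
  exact AddSubgroup.zmultiples_le.2 (AddSubgroup.subset_closure (Set.mem_range_self j)) hx

@[to_additive]
theorem MonoidHom.map_pow_eq_one_of_closure_eq_top {G H : Type*} [Group G] [CommGroup H]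
    {s : Set G} (hs : Subgroup.closure s = ⊤) (f : G →* H) {n : ℕ}
    (h : ∀ x ∈ s, f x ^ n = 1) (x : G) : f x ^ n = 1 :=
  DFunLike.congr_fun (MonoidHom.eq_of_eqOn_dense (f := (powMonoidHom n).comp f) (g := 1) hs h) x

theorem FiniteField.orderOf_dvd_card_sub_one {K : Type*} [Field K] [Fintype K] (u : Kˣ) :
    orderOf u ∣ Fintype.card K - 1 := by
  classical
  exact Fintype.card_units (α := K) ▸ orderOf_dvd_card

theorem FiniteField.card_sub_one_dvd_of_forall_pow_eq_one {K : Type*} [Field K] [Fintype K]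
    {n : ℕ} (h : ∀ u : Kˣ, u ^ n = 1) : Fintype.card K - 1 ∣ n := by
  classical
  rw [← Fintype.card_units, ← Nat.card_eq_fintype_card, ← IsCyclic.exponent_eq_card]
  exact Monoid.exponent_dvd_of_forall_pow_eq_one h

/-- Lemma 2.1: if the gcd of the second largest invariant factor of `ℤ^I/Γ` with `Q-1`
is `B`-smooth, then the image of the generator of the largest invariant factor has order
divisible by `(Q-1)/v` for some `B`-smooth `v` dividing `Q-1`. -/
theorem stmt0 {K : Type*} [Field K] [Fintype K] {I : Type*} [Fintype I]
    (β : I → Kˣ) (hβ : Subgroup.closure (Set.range β) = ⊤)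
    (Γ : AddSubgroup (I → ℤ))
    (φ : ((I → ℤ) ⧸ Γ) →+ Additive Kˣ)
    (hφ : ∀ v : I → ℤ, φ (QuotientAddGroup.mk v) = Additive.ofMul (∏ i, β i ^ v i))
    (k : ℕ) (hk : 2 ≤ k) (e : Fin k → (I → ℤ) ⧸ Γ) (d : Fin k → ℕ)
    (hinternal : DirectSum.IsInternal (fun j : Fin k => AddSubgroup.zmultiples (e j)))
    (hord : ∀ j, addOrderOf (e j) = d j)
    (hdvd : ∀ j : Fin k, ∀ hj : (j : ℕ) + 1 < k, d j ∣ d ⟨(j : ℕ) + 1, hj⟩)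
    (B : ℕ)
    (hsmooth : ∀ ℓ : ℕ, ℓ.Prime →
      ℓ ∣ Nat.gcd (d ⟨k - 2, by omega⟩) (Fintype.card K - 1) → ℓ ≤ B) :
    ∃ v : ℕ, 0 < v ∧ v ∣ Fintype.card K - 1 ∧
      (∀ ℓ : ℕ, ℓ.Prime → ℓ ∣ v → ℓ ≤ B) ∧
      (Fintype.card K - 1) / v ∣ orderOf (Additive.toMul (φ (e ⟨k - 1, by omega⟩))) := by
  classical
  set g := Additive.toMul (φ (e ⟨k - 1, by omega⟩))
  set v := Nat.gcd (d ⟨k - 2, by omega⟩) (Fintype.card K - 1)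
  have hv : v ∣ Fintype.card K - 1 := Nat.gcd_dvd_right _ _
  have hv_pos : 0 < v := Nat.gcd_pos_of_pos_right _ (by have := Fintype.one_lt_card (α := K); omega)
  have hgen : ∀ j, addOrderOf (φ (e j)) ∣ orderOf g * v := by
    intro j
    rcases (Nat.le_sub_one_of_lt j.isLt).eq_or_lt with hj | hj
    · rw [show j = ⟨k - 1, by omega⟩ from Fin.ext hj]
      exact dvd_mul_right _ _
    · have hd : d j ∣ d ⟨k - 2, by omega⟩ :=
        Fin.dvd_of_le_of_forall_dvd_succ hdvd (Fin.le_def.2 (by simp; omega))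
      refine (Nat.dvd_gcd ?_ (FiniteField.orderOf_dvd_card_sub_one _)).trans (dvd_mul_left _ _)
      exact (hord j ▸ addOrderOf_map_dvd φ (e j)).trans hd
  have hφ_kill : ∀ x, (orderOf g * v) • φ x = 0 :=
    φ.map_nsmul_eq_zero_of_closure_eq_top hinternal.addSubgroup_closure_range_eq_top
      fun _ ⟨j, hj⟩ => hj ▸ addOrderOf_dvd_iff_nsmul_eq_zero.1 (hgen j)
  have hunits_kill : ∀ u : Kˣ, u ^ (orderOf g * v) = 1 := by
    refine (MonoidHom.id Kˣ).map_pow_eq_one_of_closure_eq_top hβ fun _ ⟨i, hi⟩ => hi ▸ ?_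
    have hβi : ∏ j, β j ^ (Pi.single i (1 : ℤ) : I → ℤ) j = β i := by simp [Pi.single_apply]
    have := hφ_kill (QuotientAddGroup.mk (Pi.single i 1))
    rwa [hφ, hβi, ← ofMul_pow, ofMul_eq_zero] at this
  refine ⟨v, hv_pos, hv, hsmooth, ?_⟩
  rw [Nat.div_dvd_iff_dvd_mul hv hv_pos, mul_comm]
  exact FiniteField.card_sub_one_dvd_of_forall_pow_eq_one hunits_kill
end

section
/- Let p be a prime, q a power of p, and K a field containing the finite field F_q with q elements. Then for all a, b, c, d ∈ K, the following identity holds in the polynomial ring K[X]: (c·X + d) · ∏_{α ∈ F_q} ((a − α c)·X + (b − α d)) = (c·X + d)·(a·X + b)^q − (a·X + b)·(c·X + d)^q. -/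
open Polynomial

/-- `∏_{α ∈ F} (X - α) = X^q - X` in `F[X]`. -/
lemma aux_prod_X_sub_C (F : Type*) [Field F] [Fintype F] :
    ∏ α : F, (X - C α) = X ^ Fintype.card F - X := by
  classical
  have hcard := Fintype.one_lt_card (α := F)
  have hmonic : (X ^ Fintype.card F - X : F[X]).Monic := by
    apply (monic_X_pow _).sub_of_left
    rw [degree_X_pow, degree_X]
    exact_mod_cast hcard
  have hroots := FiniteField.roots_X_pow_card_sub_X F
  have hdeg := FiniteField.X_pow_card_sub_X_natDegree_eq F hcard
  have := prod_multiset_X_sub_C_of_monic_of_roots_card_eq hmonic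
    (by rw [hroots, hdeg]; exact Finset.card_univ)
  rw [← this, hroots]
  exact (Finset.prod_eq_multiset_prod _ _)

lemma aux_key {F L : Type*} [Field F] [Fintype F] [Field L] (g : F →+* L) (u v : L) :
    v * ∏ α : F, (u - g α * v) =
      v * u ^ Fintype.card F - u * v ^ Fintype.card F := by
  classical
  set q := Fintype.card F with hq
  have hq0 : q ≠ 0 := Fintype.card_ne_zero
  rcases eq_or_ne v 0 with rfl | hv
  · have h0 : (0 : F) ∈ (Finset.univ : Finset F) := Finset.mem_univ 0
    simp [zero_pow hq0]
  · set t := u / v with ht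
    have key : ∏ α : F, (t - g α) = t ^ q - t := by
      have h := congrArg (fun P : F[X] => Polynomial.eval t (P.map g)) (aux_prod_X_sub_C F)
      simpa [Polynomial.map_prod, Polynomial.eval_prod] using h
    have hprod : ∏ α : F, (u - g α * v) = v ^ q * (t ^ q - t) := by
      rw [← key, hq, ← Finset.card_univ, ← Finset.prod_const, ← Finset.prod_mul_distrib]
      refine Finset.prod_congr rfl fun α _ => ?_
      rw [mul_sub, mul_comm v, ht, div_mul_cancel₀ u hv, mul_comm v]
    rw [hprod, ht, div_pow]
    field_simp

/-- The polynomial identity from Section 2.4, obtained by substituting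
`x ↦ (aX+b)/(cX+d)` into `∏_{α ∈ F_q} (x - α) = x^q - x`. -/
theorem stmt4 (p q e : ℕ) (hp : p.Prime) (he : 0 < e) (hq : q = p ^ e)
    {F K : Type*} [Field F] [Fintype F] (hF : Fintype.card F = q)
    [Field K] (f : F →+* K) (a b c d : K) :
    (C c * X + C d) * ∏ α : F, (C (a - f α * c) * X + C (b - f α * d)) =
      (C c * X + C d) * (C a * X + C b) ^ q -
        (C a * X + C b) * (C c * X + C d) ^ q := by
  subst hF
  have hfac : ∀ α : F, (C (a - f α * c) * X + C (b - f α * d) : K[X]) =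
      (C a * X + C b) - C (f α) * (C c * X + C d) := by
    intro α; simp only [C_sub, C_mul]; ring
  apply IsFractionRing.injective K[X] (RatFunc K)
  simp only [hfac]
  simp only [map_mul, map_prod, map_sub, map_pow]
  exact aux_key ((algebraMap K[X] (RatFunc K)).comp (Polynomial.C.comp f)) _ _
end

section
/- Let p be a prime, q a power of p, K a field containing the finite field F_q with q elements, L a field extension of K, and h_0, h_1 ∈ K[x]. Let ζ ∈ L satisfy h_1(ζ)·ζ^q = h_0(ζ). Then for all a, b, c, d ∈ K, the following identity holds in L: h_1(ζ)·(c·ζ + d)·∏_{α ∈ F_q} ((a − α c)·ζ + (b − α d)) = N(ζ), where N(x) := (c·a^q − a·c^q)·x·h_0(x) + (d·a^q − b·c^q)·h_0(x) + (c·b^q − a·d^q)·x·h_1(x) + (d·b^q − b·d^q)·h_1(x). -/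
open Polynomial

/-- Over a finite field `F` of cardinality `q`, `∏_{α}(X - α) = X^q - X`. -/
theorem prodXsubC_eq (F : Type*) [Field F] [Fintype F] :
    (∏ α : F, (X - C α) : F[X]) = X ^ Fintype.card F - X := by
  classical
  have h1 : (1:ℕ) < Fintype.card F := Fintype.one_lt_card
  have hmonic : (X ^ Fintype.card F - X : F[X]).Monic := by
    apply monic_X_pow_sub
    rw [degree_X]
    exact_mod_cast h1
  have hroots := FiniteField.roots_X_pow_card_sub_X F
  have hnat : (X ^ Fintype.card F - X : F[X]).natDegree = Fintype.card F :=
    FiniteField.X_pow_card_sub_X_natDegree_eq F h1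
  have hmain := prod_multiset_X_sub_C_of_monic_of_roots_card_eq hmonic
    (by rw [hroots, hnat]; simp)
  rw [hroots] at hmain
  rw [Finset.prod_eq_multiset_prod]; exact hmain

/-- The identity underlying Joux's relation generation (Section 2.4): if
`h₁(ζ)·ζ^q = h₀(ζ)`, then `h₁(ζ)(cζ+d)∏_{α ∈ F_q}((a-αc)ζ+(b-αd)) = N(ζ)`. -/
theorem stmt6 (p q e : ℕ) (hp : p.Prime) (he : 0 < e) (hq : q = p ^ e)
    {F K L : Type*} [Field F] [Fintype F] (hF : Fintype.card F = q)
    [Field K] [Field L] [Algebra K L] (f : F →+* K)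
    (h0 h1 : Polynomial K) (ζ : L)
    (hζ : aeval ζ h1 * ζ ^ q = aeval ζ h0)
    (a b c d : K) :
    aeval ζ h1 * (algebraMap K L c * ζ + algebraMap K L d) *
        ∏ α : F, (algebraMap K L (a - f α * c) * ζ + algebraMap K L (b - f α * d)) =
      aeval ζ (C (c * a ^ q - a * c ^ q) * X * h0 + C (d * a ^ q - b * c ^ q) * h0 +
        C (c * b ^ q - a * d ^ q) * X * h1 + C (d * b ^ q - b * d ^ q) * h1) := by
  classical
  set φ := algebraMap K L with hφ
  set g : F →+* L := φ.comp f with hg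
  -- characteristic
  have hq1 : 1 < q := by
    rw [hq]; exact Nat.one_lt_pow he.ne' hp.one_lt
  obtain ⟨n, hp', hcard⟩ := FiniteField.card F (ringChar F)
  have hpr : ringChar F = p := by
    have hdvd : p ∣ ringChar F ^ (n : ℕ) := by
      rw [← hcard, hF, hq]; exact dvd_pow_self p he.ne'
    exact ((Nat.prime_dvd_prime_iff_eq hp hp').mp (hp.dvd_of_dvd_pow hdvd)).symm
  haveI : CharP F p := hpr ▸ ringChar.charP F
  haveI : Fact p.Prime := ⟨hp⟩
  haveI : CharP L p := charP_of_injective_ringHom g.injective p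
  -- product identity in L
  have hprodL : ∀ t : L, ∏ α : F, (t - g α) = t ^ q - t := by
    intro t
    have hpoly := prodXsubC_eq F
    rw [hF] at hpoly
    have := congrArg (fun P : F[X] => eval t (P.map g)) hpoly
    simpa [Polynomial.map_prod, eval_prod] using this
  have key : ∀ u v : L, v * ∏ α : F, (u - g α * v) = u ^ q * v - u * v ^ q := by
    intro u v
    rcases eq_or_ne v 0 with rfl | hv
    · simp [zero_pow (by omega : q ≠ 0)]
    · have hfac : ∀ α : F, u - g α * v = v * (u / v - g α) := by
        intro α; field_simp
      rw [Finset.prod_congr rfl fun α _ => hfac α, Finset.prod_mul_distrib,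
        Finset.prod_const, hprodL (u / v), Finset.card_univ, hF, div_pow]
      field_simp
  -- rewrite factors
  have hfac : ∀ α : F, φ (a - f α * c) * ζ + φ (b - f α * d)
      = (φ a * ζ + φ b) - g α * (φ c * ζ + φ d) := by
    intro α
    simp only [hg, RingHom.coe_comp, Function.comp_apply, map_sub, map_mul]
    ring
  rw [Finset.prod_congr rfl fun α _ => hfac α, mul_assoc,
    key (φ a * ζ + φ b) (φ c * ζ + φ d)]
  have hexp1 : (φ a * ζ + φ b) ^ q = φ a ^ q * ζ ^ q + φ b ^ q := by
    subst hq; rw [add_pow_char_pow, mul_pow]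
  have hexp2 : (φ c * ζ + φ d) ^ q = φ c ^ q * ζ ^ q + φ d ^ q := by
    subst hq; rw [add_pow_char_pow, mul_pow]
  simp only [hexp1, hexp2, map_add, map_mul, map_sub, map_pow, aeval_X, aeval_C, ← hφ]
  linear_combination (φ a ^ q * (φ c * ζ + φ d) - φ c ^ q * (φ a * ζ + φ b)) * hζ
end

section
/- Let p be a prime, q a power of p, K a finite field with q^2 elements, and λ ∈ K a generator of the cyclic group K^×. Then the polynomial x^{q−1} − λ is irreducible in K[x]. -/
open Polynomial IntermediateField

/-- Arithmetic key lemma: if `(q-1)*(q²-1) ∣ (q²)^d - 1` (in ℤ) then `q - 1 ∣ d`. -/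
lemma aux_dvd_of_dvd (q d : ℕ) (hq : 2 ≤ q)
    (h : ((q : ℤ) - 1) * ((q : ℤ) ^ 2 - 1) ∣ ((q : ℤ) ^ 2) ^ d - 1) :
    (q - 1 : ℕ) ∣ d := by
  set Q : ℤ := (q : ℤ) ^ 2 with hQ
  have hgeom : Q ^ d - 1 = (Q - 1) * ∑ i ∈ Finset.range d, Q ^ i := by
    rw [← geom_sum_mul, mul_comm]
  have hQ1 : Q - 1 ≠ 0 := by
    have : (2 : ℤ) ≤ (q : ℤ) := by exact_mod_cast hq
    have : (4 : ℤ) ≤ Q := by nlinarith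
    omega
  have h2 : ((q : ℤ) - 1) ∣ ∑ i ∈ Finset.range d, Q ^ i := by
    rw [hgeom] at h
    have h' : (Q - 1) * (((q : ℤ) - 1)) ∣ (Q - 1) * ∑ i ∈ Finset.range d, Q ^ i := by
      have := h
      rw [mul_comm ((q : ℤ) - 1) _] at this
      exact this
    exact (mul_dvd_mul_iff_left hQ1).mp h'
  -- each Q^i ≡ 1 mod (q-1)
  have h3 : ((q : ℤ) - 1) ∣ (∑ i ∈ Finset.range d, Q ^ i) - d := by
    have : (∑ i ∈ Finset.range d, Q ^ i) - d = ∑ i ∈ Finset.range d, (Q ^ i - 1) := by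
      rw [Finset.sum_sub_distrib]
      simp
    rw [this]
    refine Finset.dvd_sum fun i _ => ?_
    have hq1Q : ((q : ℤ) - 1) ∣ Q - 1 := by
      have : Q - 1 = ((q : ℤ) - 1) * ((q : ℤ) + 1) := by ring
      rw [this]; exact Dvd.intro _ rfl
    exact hq1Q.trans (by simpa using sub_dvd_pow_sub_pow Q 1 i)
  have h4 : ((q : ℤ) - 1) ∣ (d : ℤ) := by
    have := dvd_sub h2 h3
    simpa using this
  have : ((q - 1 : ℕ) : ℤ) ∣ (d : ℤ) := by
    have hcast : ((q - 1 : ℕ) : ℤ) = (q : ℤ) - 1 := by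
      have : 1 ≤ q := by omega
      push_cast [this]; ring
    rw [hcast]; exact h4
  exact_mod_cast this

/-- Section 2.7: if `λ` generates the multiplicative group of the field with `q²`
elements, then `x^{q-1} - λ` is irreducible. -/
theorem stmt8 (p q e : ℕ) (hp : p.Prime) (he : 0 < e) (hq : q = p ^ e)
    {K : Type*} [Field K] [Fintype K] (hK : Fintype.card K = q ^ 2)
    (lam : Kˣ) (hlam : ∀ x : Kˣ, x ∈ Subgroup.zpowers lam) :
    Irreducible (Polynomial.X ^ (q - 1) - Polynomial.C (lam : K)) := by
  have hq2 : 2 ≤ q := by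
    rw [hq]
    exact hp.two_le.trans (Nat.le_self_pow he.ne' p)
  set n := q - 1 with hn
  have hn0 : n ≠ 0 := by omega
  set f : K[X] := X ^ n - C (lam : K) with hf
  have hfm : f.Monic := monic_X_pow_sub_C _ hn0
  have hfdeg : f.natDegree = n := natDegree_X_pow_sub_C
  -- order of lam
  have hordlam : orderOf lam = q ^ 2 - 1 := by
    rw [orderOf_eq_card_of_forall_mem_zpowers hlam, Nat.card_units,
      Nat.card_eq_fintype_card, hK]
  -- a root in the algebraic closure
  set L := AlgebraicClosure K with hL
  obtain ⟨μ, hμ⟩ : ∃ x : L, (Polynomial.aeval x) f = 0 := by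
    have hdeg : (f.map (algebraMap K L)).degree ≠ 0 := by
      rw [Polynomial.degree_map, Polynomial.degree_eq_natDegree hfm.ne_zero, hfdeg]
      simp [hn0]
    obtain ⟨x, hx⟩ := IsAlgClosed.exists_root _ hdeg
    exact ⟨x, by rwa [Polynomial.aeval_def, Polynomial.eval₂_eq_eval_map]⟩
  have hμpow : μ ^ n = algebraMap K L (lam : K) := by
    have h0 := hμ
    rw [hf] at h0
    simp only [map_sub, map_pow, Polynomial.aeval_X, Polynomial.aeval_C, sub_eq_zero] at h0
    exact h0
  have hμ0 : μ ≠ 0 := by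
    intro h
    rw [h, zero_pow hn0] at hμpow
    exact lam.ne_zero ((algebraMap K L).injective
      (by rw [map_zero]; exact hμpow.symm))
  -- units
  have hinj : Function.Injective ((algebraMap K L) : K →* L) := (algebraMap K L).injective
  set lamL : Lˣ := Units.map ((algebraMap K L) : K →* L) lam with hlamL
  have hUinj : Function.Injective (Units.map ((algebraMap K L) : K →* L)) := by
    intro a b hab
    exact Units.ext (hinj (congrArg Units.val hab))
  have hordlamL : orderOf lamL = q ^ 2 - 1 := by
    rw [hlamL, orderOf_injective _ hUinj, hordlam]
  set u : Lˣ := Units.mk0 μ hμ0 with hu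
  have hupow : u ^ n = lamL := by
    ext
    push_cast [hu, hlamL]
    exact hμpow
  have hdvd1 : (q ^ 2 - 1) ∣ orderOf u := by
    rw [← hordlamL, ← hupow]
    exact orderOf_pow_dvd n
  have hndvd : n ∣ q ^ 2 - 1 := by
    refine ⟨q + 1, ?_⟩
    have h := Nat.sq_sub_sq q 1
    simp only [one_pow] at h
    rw [hn, h]
    ring
  have hordu : orderOf u = (q ^ 2 - 1) * n := by
    have h1 : orderOf (u ^ n) = orderOf u / Nat.gcd (orderOf u) n := orderOf_pow' u hn0
    rw [hupow, hordlamL] at h1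
    have hgcd : Nat.gcd (orderOf u) n = n :=
      Nat.gcd_eq_right (hndvd.trans hdvd1)
    rw [hgcd] at h1
    have hdvdn : n ∣ orderOf u := hndvd.trans hdvd1
    rw [h1, Nat.div_mul_cancel hdvdn]
  -- the subfield generated by μ
  have hint : IsIntegral K μ := ⟨f, hfm, by rwa [← Polynomial.aeval_def]⟩
  haveI : FiniteDimensional K K⟮μ⟯ := IntermediateField.adjoin.finiteDimensional hint
  set d := Module.finrank K K⟮μ⟯ with hd
  have hdmin : d = (minpoly K μ).natDegree := IntermediateField.adjoin.finrank hint
  haveI : Finite K⟮μ⟯ := Module.finite_of_finite K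
  haveI : Fintype K⟮μ⟯ := Fintype.ofFinite _
  have hcardF : Fintype.card K⟮μ⟯ = (q ^ 2) ^ d := by
    rw [Module.card_eq_pow_finrank (K := K) (V := K⟮μ⟯), hK]
  -- order of μ inside K⟮μ⟯ˣ divides (q²)^d - 1
  set μF : K⟮μ⟯ := IntermediateField.AdjoinSimple.gen K μ with hμF
  have hμF0 : μF ≠ 0 := by
    intro h
    exact hμ0 (by simpa [hμF] using congrArg Subtype.val h)
  haveI : Fintype (K⟮μ⟯)ˣ := Fintype.ofFinite _
  set uF : K⟮μ⟯ˣ := Units.mk0 μF hμF0 with huF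
  have hmapuF : Units.map ((algebraMap K⟮μ⟯ L) : K⟮μ⟯ →* L) uF = u := by
    ext
    simp [huF, hu, hμF]
  have horduF : orderOf uF = (q ^ 2 - 1) * n := by
    have hinjF : Function.Injective (Units.map ((algebraMap K⟮μ⟯ L) : K⟮μ⟯ →* L)) := by
      intro a b hab
      exact Units.ext ((algebraMap K⟮μ⟯ L).injective (congrArg Units.val hab))
    rw [← orderOf_injective _ hinjF uF, hmapuF, hordu]
  have hdvdcard : (q ^ 2 - 1) * n ∣ (q ^ 2) ^ d - 1 := by
    rw [← horduF]
    have := orderOf_dvd_natCard (G := (K⟮μ⟯)ˣ) uF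
    rwa [Nat.card_units, Nat.card_eq_fintype_card, hcardF] at this
  -- conclude n ∣ d
  have hq21 : 1 ≤ q ^ 2 := Nat.one_le_pow _ _ (by omega)
  have hdvdZ : ((q : ℤ) - 1) * ((q : ℤ) ^ 2 - 1) ∣ ((q : ℤ) ^ 2) ^ d - 1 := by
    have e1 : ((q ^ 2 - 1 : ℕ) : ℤ) = (q : ℤ) ^ 2 - 1 := by
      rw [Nat.cast_sub hq21]; push_cast; ring
    have e2 : ((n : ℕ) : ℤ) = (q : ℤ) - 1 := by
      rw [hn, Nat.cast_sub (by omega : 1 ≤ q)]; push_cast; ring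
    have e3 : (((q ^ 2) ^ d - 1 : ℕ) : ℤ) = ((q : ℤ) ^ 2) ^ d - 1 := by
      rw [Nat.cast_sub (Nat.one_le_pow _ _ (by omega))]; push_cast; ring
    have hcast2 := Int.natCast_dvd_natCast.mpr hdvdcard
    rw [Nat.cast_mul, e1, e2, e3, mul_comm] at hcast2
    exact hcast2
  have hndvdd : n ∣ d := by
    rw [hn]
    exact aux_dvd_of_dvd q d hq2 hdvdZ
  -- d = n
  have hdpos : 0 < d := Module.finrank_pos
  have hnd : n ≤ d := Nat.le_of_dvd hdpos hndvdd
  have hmindvd : minpoly K μ ∣ f := minpoly.dvd K μ hμ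
  have hdn : d ≤ n := by
    rw [hdmin, ← hfdeg]
    exact Polynomial.natDegree_le_of_dvd hmindvd hfm.ne_zero
  have : f = minpoly K μ :=
    Polynomial.eq_of_monic_of_dvd_of_natDegree_le (minpoly.monic hint) hfm hmindvd
      (by rw [hfdeg, ← hdmin]; omega)
  rw [this]
  exact minpoly.irreducible hint
end

section
/- Let F be a finite field and let m, s, t be integers with m ≥ 4, s ≥ 0 and 2 ≤ t < m − 1. Set r = m + s·(m−1) + t. For a positive integer k, let I_k denote the number of monic irreducible polynomials of degree k in F[x]. Then the number of monic squarefree polynomials f ∈ F[x] of degree r that have no root in F (i.e., no linear factor) and have a monic irreducible factor of degree m is at least I_m · binom(I_{m−1}, s) · I_t, where binom denotes the binomial coefficient. -/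
/-- The number of monic irreducible polynomials of degree `k` over `F`. -/
noncomputable def numMonicIrreducible (F : Type*) [Field F] (k : ℕ) : ℕ :=
  Set.ncard {g : Polynomial F | g.Monic ∧ Irreducible g ∧ g.natDegree = k}

open Polynomial

private lemma finite_natDegree_le {F : Type*} [Field F] [Fintype F] (n : ℕ) :
    {p : Polynomial F | p.natDegree ≤ n}.Finite := by
  apply Set.Finite.of_finite_image (f := fun p (i : Fin (n + 1)) => p.coeff i)
  · exact Set.toFinite _
  · intro p hp q hq h
    ext i
    rcases le_or_gt i n with hi | hi
    · exact congrFun h ⟨i, Nat.lt_succ_of_le hi⟩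
    · rw [coeff_eq_zero_of_natDegree_lt (lt_of_le_of_lt hp hi),
        coeff_eq_zero_of_natDegree_lt (lt_of_le_of_lt hq hi)]

private lemma monic_irred_dvd_eq {F : Type*} [Field F] {g₁ g₂ : Polynomial F}
    (h₁m : g₁.Monic) (h₁ : Irreducible g₁) (h₂m : g₂.Monic) (h₂ : Irreducible g₂)
    (hd : g₁ ∣ g₂) : g₁ = g₂ :=
  eq_of_monic_of_associated h₁m h₂m (h₁.associated_of_dvd h₂ hd)

private lemma squarefree_multiset_prod {F : Type*} [Field F] (M : Multiset (Polynomial F))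
    (h : ∀ g ∈ M, g.Monic ∧ Irreducible g) (hnd : M.Nodup) : Squarefree M.prod := by
  induction M using Multiset.induction with
  | empty => simpa using squarefree_one
  | cons a M ih =>
    rw [Multiset.prod_cons]
    have ha := h a (Multiset.mem_cons_self a M)
    have hMnd := (Multiset.nodup_cons.mp hnd).2
    have haM := (Multiset.nodup_cons.mp hnd).1
    refine squarefree_mul_iff.mpr ⟨?_, ha.2.squarefree, ih (fun g hg => h g (Multiset.mem_cons_of_mem hg)) hMnd⟩
    refine ha.2.isRelPrime_iff_not_dvd.mpr fun hdvd => ?_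
    obtain ⟨b, hb, hab⟩ := ha.2.prime.exists_mem_multiset_dvd hdvd
    have hbm := h b (Multiset.mem_cons_of_mem hb)
    exact haM (monic_irred_dvd_eq ha.1 ha.2 hbm.1 hbm.2 hab ▸ hb)

/-- Section 2.2: the lower bound `N_q(r, m) ≥ I_m · C(I_{m-1}, s) · I_t` on the number
of monic squarefree polynomials of degree `r = m + s(m-1) + t` with no linear factor
and an irreducible factor of degree `m`. -/
theorem stmt9 {F : Type*} [Field F] [Fintype F]
    (m s t r : ℕ) (hm : 4 ≤ m) (ht2 : 2 ≤ t) (ht : t < m - 1)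
    (hr : r = m + s * (m - 1) + t) :
    numMonicIrreducible F m * (numMonicIrreducible F (m - 1)).choose s *
        numMonicIrreducible F t ≤
      Set.ncard {f : Polynomial F | f.Monic ∧ Squarefree f ∧ f.natDegree = r ∧
        (∀ x : F, f.eval x ≠ 0) ∧
        ∃ g : Polynomial F, g.Monic ∧ Irreducible g ∧ g.natDegree = m ∧ g ∣ f} := by
  classical
  -- basic degree inequalities
  have hm1 : 3 ≤ m - 1 := by omega
  have htm1 : t ≠ m - 1 := by omega
  have htm : t ≠ m := by omega
  have hmm1 : m ≠ m - 1 := by omega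
  -- the three sets are finite
  have hA : {g : Polynomial F | g.Monic ∧ Irreducible g ∧ g.natDegree = m}.Finite :=
    (finite_natDegree_le m).subset fun g hg => le_of_eq hg.2.2
  have hB : {g : Polynomial F | g.Monic ∧ Irreducible g ∧ g.natDegree = m - 1}.Finite :=
    (finite_natDegree_le (m - 1)).subset fun g hg => le_of_eq hg.2.2
  have hC : {g : Polynomial F | g.Monic ∧ Irreducible g ∧ g.natDegree = t}.Finite :=
    (finite_natDegree_le t).subset fun g hg => le_of_eq hg.2.2
  set a := hA.toFinset with ha_def
  set b := hB.toFinset with hb_def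
  set c := hC.toFinset with hc_def
  have hamem : ∀ g, g ∈ a ↔ g.Monic ∧ Irreducible g ∧ g.natDegree = m := fun g =>
    Set.Finite.mem_toFinset _
  have hbmem : ∀ g, g ∈ b ↔ g.Monic ∧ Irreducible g ∧ g.natDegree = m - 1 := fun g =>
    Set.Finite.mem_toFinset _
  have hcmem : ∀ g, g ∈ c ↔ g.Monic ∧ Irreducible g ∧ g.natDegree = t := fun g =>
    Set.Finite.mem_toFinset _
  -- the domain of the injection
  set D : Finset (Polynomial F × Finset (Polynomial F) × Polynomial F) :=
    a ×ˢ (b.powersetCard s ×ˢ c) with hD_def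
  set φ : Polynomial F × Finset (Polynomial F) × Polynomial F → Polynomial F :=
    fun x => (x.1 ::ₘ x.2.2 ::ₘ x.2.1.val).prod with hφ_def
  -- basic data extraction
  have hmem : ∀ x ∈ D, (x.1.Monic ∧ Irreducible x.1 ∧ x.1.natDegree = m) ∧
      (x.2.1 ⊆ b ∧ x.2.1.card = s) ∧ (x.2.2.Monic ∧ Irreducible x.2.2 ∧ x.2.2.natDegree = t) := by
    intro x hx
    rw [hD_def, Finset.mem_product] at hx
    obtain ⟨h1, h2⟩ := hx
    rw [Finset.mem_product] at h2
    obtain ⟨h2, h3⟩ := h2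
    rw [Finset.mem_powersetCard] at h2
    exact ⟨(hamem _).mp h1, h2, (hcmem _).mp h3⟩
  -- φ maps D into the target set
  set T : Set (Polynomial F) := {f : Polynomial F | f.Monic ∧ Squarefree f ∧ f.natDegree = r ∧
      (∀ x : F, f.eval x ≠ 0) ∧
      ∃ g : Polynomial F, g.Monic ∧ Irreducible g ∧ g.natDegree = m ∧ g ∣ f} with hT_def
  have hmaps : ∀ x ∈ D, φ x ∈ T := by
    intro x hx
    obtain ⟨⟨hpm, hpi, hpd⟩, ⟨hSb, hSc⟩, hqm, hqi, hqd⟩ := hmem x hx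
    set M : Multiset (Polynomial F) := x.1 ::ₘ x.2.2 ::ₘ x.2.1.val with hM_def
    have hMall : ∀ g ∈ M, g.Monic ∧ Irreducible g := by
      intro g hg
      rw [hM_def, Multiset.mem_cons, Multiset.mem_cons] at hg
      rcases hg with rfl | rfl | hg
      · exact ⟨hpm, hpi⟩
      · exact ⟨hqm, hqi⟩
      · have := (hbmem g).mp (hSb hg)
        exact ⟨this.1, this.2.1⟩
    have hdegS : ∀ g ∈ x.2.1.val, g.natDegree = m - 1 := fun g hg =>
      ((hbmem g).mp (hSb hg)).2.2
    have hnd : M.Nodup := by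
      rw [hM_def, Multiset.nodup_cons, Multiset.nodup_cons]
      refine ⟨?_, ?_, x.2.1.nodup⟩
      · rw [Multiset.mem_cons]
        rintro (he | hg)
        · have : x.1.natDegree = t := by rw [he, hqd]
          omega
        · have := hdegS _ hg
          omega
      · intro hg
        have := hdegS _ hg
        omega
    have hφx : φ x = M.prod := rfl
    have hmonic : (φ x).Monic := by
      rw [hφx]
      have := monic_multiset_prod_of_monic M id fun g hg => (hMall g hg).1
      simpa using this
    have hsf : Squarefree (φ x) := by
      rw [hφx]; exact squarefree_multiset_prod M hMall hnd
    have hdeg : (φ x).natDegree = r := by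
      rw [hφx, natDegree_multiset_prod_of_monic _ fun g hg => (hMall g hg).1, hM_def,
        Multiset.map_cons, Multiset.map_cons, Multiset.sum_cons, Multiset.sum_cons]
      have : x.2.1.val.map natDegree = Multiset.replicate s (m - 1) := by
        rw [Multiset.eq_replicate]
        constructor
        · rw [Multiset.card_map]; exact hSc
        · intro d hd
          obtain ⟨g, hg, rfl⟩ := Multiset.mem_map.mp hd
          exact hdegS g hg
      rw [this, Multiset.sum_replicate, smul_eq_mul, hpd, hqd, hr]
      ring
    have hroot : ∀ y : F, (φ x).eval y ≠ 0 := by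
      intro y hy
      have hdvd : (X - C y) ∣ M.prod := by rw [← hφx]; exact dvd_iff_isRoot.mpr hy
      obtain ⟨g, hg, hXg⟩ := (irreducible_X_sub_C y).prime.exists_mem_multiset_dvd hdvd
      have hgm := hMall g hg
      have : X - C y = g := monic_irred_dvd_eq (monic_X_sub_C y) (irreducible_X_sub_C y)
        hgm.1 hgm.2 hXg
      have hg1 : g.natDegree = 1 := by rw [← this]; exact natDegree_X_sub_C y
      rw [hM_def, Multiset.mem_cons, Multiset.mem_cons] at hg
      rcases hg with rfl | rfl | hg
      · omega
      · omega
      · have := hdegS g hg; omega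
    refine ⟨hmonic, hsf, hdeg, hroot, x.1, hpm, hpi, hpd, ?_⟩
    rw [hφx]
    exact Multiset.dvd_prod (Multiset.mem_cons_self _ _)
  -- injectivity
  have hinj : Set.InjOn φ D := by
    rintro ⟨p, S, q⟩ hx ⟨p', S', q'⟩ hy hxy
    obtain ⟨⟨hpm, hpi, hpd⟩, ⟨hSb, hSc⟩, hqm, hqi, hqd⟩ := hmem (p, S, q) hx
    obtain ⟨⟨hpm', hpi', hpd'⟩, ⟨hSb', hSc'⟩, hqm', hqi', hqd'⟩ := hmem (p', S', q') hy
    simp only [hφ_def, Multiset.prod_cons] at hxy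
    -- first component
    have hpp : p' = p := by
      have hd : p' ∣ p * (q * S.val.prod) := ⟨_, hxy⟩
      rcases (hpi'.prime.dvd_mul.mp hd) with h | h
      · exact monic_irred_dvd_eq hpm' hpi' hpm hpi h
      rcases (hpi'.prime.dvd_mul.mp h) with h | h
      · exact absurd (monic_irred_dvd_eq hpm' hpi' hqm hqi h)
          (fun he => htm (by rw [← hqd, ← he, hpd']))
      · obtain ⟨g, hg, hgd⟩ := hpi'.prime.exists_mem_multiset_dvd h
        have hgb := (hbmem g).mp (hSb hg)
        have he := monic_irred_dvd_eq hpm' hpi' hgb.1 hgb.2.1 hgd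
        have h1 := hgb.2.2
        rw [← he] at h1
        omega
    subst hpp
    have hxy2 : q * S.val.prod = q' * S'.val.prod :=
      mul_left_cancel₀ hpm.ne_zero hxy
    -- second components
    have hqq : q' = q := by
      have hd : q' ∣ q * S.val.prod := ⟨_, hxy2⟩
      rcases (hqi'.prime.dvd_mul.mp hd) with h | h
      · exact monic_irred_dvd_eq hqm' hqi' hqm hqi h
      · obtain ⟨g, hg, hgd⟩ := hqi'.prime.exists_mem_multiset_dvd h
        have hgb := (hbmem g).mp (hSb hg)
        have he := monic_irred_dvd_eq hqm' hqi' hgb.1 hgb.2.1 hgd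
        have h1 := hgb.2.2
        rw [← he] at h1
        omega
    have hxy3 : S.val.prod = S'.val.prod := by
      rw [hqq] at hxy2
      exact mul_left_cancel₀ hqm.ne_zero hxy2
    have hSS : S' = S := by
      apply Finset.eq_of_subset_of_card_le _ (le_of_eq (hSc.trans hSc'.symm))
      intro g' hg'
      have hgb' := (hbmem g').mp (hSb' hg')
      have hd : g' ∣ S.val.prod := hxy3 ▸ Multiset.dvd_prod hg'
      obtain ⟨g, hg, hgd⟩ := hgb'.2.1.prime.exists_mem_multiset_dvd hd
      have hgb := (hbmem g).mp (hSb hg)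
      rwa [monic_irred_dvd_eq hgb'.1 hgb'.2.1 hgb.1 hgb.2.1 hgd]
    rw [hqq, hSS]
  -- conclusion: counting
  have hTfin : T.Finite := (finite_natDegree_le r).subset fun f hf => le_of_eq hf.2.2.1
  have hsub : ↑(D.image φ) ⊆ T := by
    intro f hf
    simp only [Finset.coe_image, Set.mem_image, Finset.mem_coe] at hf
    obtain ⟨x, hx, rfl⟩ := hf
    exact hmaps x hx
  have h1 : numMonicIrreducible F m = a.card := by
    rw [numMonicIrreducible, Set.ncard_eq_toFinset_card _ hA]
  have h2 : numMonicIrreducible F (m - 1) = b.card := by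
    rw [numMonicIrreducible, Set.ncard_eq_toFinset_card _ hB]
  have h3 : numMonicIrreducible F t = c.card := by
    rw [numMonicIrreducible, Set.ncard_eq_toFinset_card _ hC]
  rw [h1, h2, h3]
  calc a.card * b.card.choose s * c.card = D.card := by
        rw [hD_def, Finset.card_product, Finset.card_product, Finset.card_powersetCard]; ring
    _ = (D.image φ).card := (Finset.card_image_of_injOn hinj).symm
    _ = (↑(D.image φ) : Set (Polynomial F)).ncard := (Set.ncard_coe_finset _).symm
    _ ≤ T.ncard := Set.ncard_le_ncard hsub hTfin
end
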